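/- arXiv:2210.10588 — 4 statements merged into one kernel-verified Lean document; each statement's English description precedes it below -/
import Mathlib

section
/- For every integer k ≥ 2, the alternating sum S'_k = Σ_{j=1}^{k} ((-1)^{j-1}/j) · Σ_{k_1+⋯+k_j=k, k_i≥1} k·k!/(k_1!⋯k_j!) equals zero. -/
/-!
Write `E = exp X - 1`. Since `E` has no constant term, the sum of `∏ 1 / kᵢ!` over the
compositions of `k` into `j` parts is the coefficient of `X ^ k` in `E ^ j`, so `S'_k` is
`k · k!` times the coefficient of `X ^ k` in `∑_{j ≤ k} (-1)^(j-1) / j · E ^ j`, a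
truncation of `log (1 + E) = X`. By the geometric sum and `E' = 1 + E`, the derivative of
that truncation is `1 - (-E) ^ k`, which agrees with `1` below degree `k`; hence its
coefficients in degrees `2, …, k` vanish.
-/

open PowerSeries Finset
open scoped Nat

namespace Composition

theorem sum_length_eq_eq_sum_finsuppAntidiag {M : Type*} [AddCommMonoid M] (n j : ℕ)
    (g : (ℕ →₀ ℕ) → M) :
    ∑ c : Composition n with c.length = j, g c.blocks.toFinsupp =
      ∑ l ∈ finsuppAntidiag (range j) n with ∀ i ∈ range j, 0 < l i, g l := by
  refine sum_bij' (fun c _ => c.blocks.toFinsupp)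
    (fun l hl => ⟨(List.range j).map l, ?pos, ?sum⟩) ?_ ?_ ?_ ?_ (fun _ _ => rfl)
  case pos =>
    simp only [List.mem_map, List.mem_range, forall_exists_index, and_imp]
    rintro _ i hi rfl
    exact (mem_filter.mp hl).2 i (mem_range.mpr hi)
  case sum =>
    exact (mem_finsuppAntidiag.mp (mem_filter.mp hl).1).1
  · rintro c hc
    obtain rfl := (mem_filter.mp hc).2
    refine mem_filter.mpr
      ⟨mem_finsuppAntidiag.mpr ⟨?_, List.toFinsupp_support_subset _⟩, fun i hi => ?_⟩
    · rw [← Fin.sum_univ_eq_sum_range]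
      exact (sum_congr rfl fun i _ => List.toFinsupp_apply_fin _ _).trans c.sum_blocksFun
    · rw [List.toFinsupp_apply_lt _ _ (mem_range.mp hi)]
      exact c.blocks_pos' i (mem_range.mp hi)
  · intro l _
    simp [Composition.length]
  · intro c hc
    obtain rfl := (mem_filter.mp hc).2
    ext1
    refine List.ext_getElem (by simp [length]) fun i _ h => ?_
    simp [List.toFinsupp_apply_lt _ _ h]
  · intro l hl
    ext i
    by_cases hij : i < j
    · rw [List.toFinsupp_apply_lt _ _ (by simpa using hij)]
      simp
    · have hsupp := (mem_finsuppAntidiag.mp (mem_filter.mp hl).1).2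
      rw [List.toFinsupp_apply_le _ _ (by simpa using hij)]
      exact (Finsupp.notMem_support_iff.mp fun h => hij (mem_range.mp (hsupp h))).symm

end Composition

namespace PowerSeries

section CommSemiring

variable {R : Type*} [CommSemiring R] {f : R⟦X⟧}

theorem coeff_pow_eq_sum_filter_pos (hf : constantCoeff f = 0) (n j : ℕ) :
    coeff n (f ^ j) =
      ∑ l ∈ finsuppAntidiag (range j) n with ∀ i ∈ range j, 0 < l i,
        ∏ i ∈ range j, coeff (l i) f := by
  rw [coeff_pow, sum_filter_of_ne]
  intro l _ hne i hi
  by_contra! h0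
  exact hne (prod_eq_zero hi (by rw [Nat.le_zero.mp h0, coeff_zero_eq_constantCoeff_apply, hf]))

theorem coeff_pow_eq_sum_compositions (hf : constantCoeff f = 0) (n j : ℕ) :
    coeff n (f ^ j) =
      ∑ c : Composition n with c.length = j, ∏ i : Fin c.length, coeff (c.blocksFun i) f := by
  rw [coeff_pow_eq_sum_filter_pos hf, ← Composition.sum_length_eq_eq_sum_finsuppAntidiag n j]
  refine sum_congr rfl fun c hc => ?_
  obtain rfl := (mem_filter.mp hc).2
  rw [← Fin.prod_univ_eq_prod_range]
  exact prod_congr rfl fun i _ => by rw [List.toFinsupp_apply_fin]; rfl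

theorem sum_compositions_eq_coeff_sum_smul_pow (hf : constantCoeff f = 0) (a : ℕ → R)
    (n : ℕ) :
    ∑ c : Composition n, a c.length * ∏ i : Fin c.length, coeff (c.blocksFun i) f =
      coeff n (∑ j ∈ range (n + 1), a j • f ^ j) := by
  simp_rw [map_sum, coeff_smul, coeff_pow_eq_sum_compositions hf, smul_eq_mul, mul_sum]
  refine (sum_fiberwise_of_maps_to (fun c _ => mem_range_succ_iff.mpr c.length_le) _).symm.trans
    (sum_congr rfl fun j _ => sum_congr rfl fun c hc => ?_)
  congr 1
  exact congrArg a (mem_filter.mp hc).2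

end CommSemiring

section Field

variable {K : Type*} [Field K] [CharZero K]

theorem coeff_exp_sub_one {n : ℕ} (hn : n ≠ 0) : coeff n (exp K - 1) = (n ! : K)⁻¹ := by
  simp [coeff_exp, coeff_one, hn]

theorem derivative_sum_range_smul_exp_sub_one_pow (k : ℕ) :
    d⁄dX K (∑ j ∈ range k, ((-1 : K) ^ j / (j + 1)) • (exp K - 1) ^ (j + 1)) =
      1 - (-(exp K - 1)) ^ k := by
  have hterm (j : ℕ) : d⁄dX K (((-1 : K) ^ j / (j + 1)) • (exp K - 1) ^ (j + 1)) =
      (-(exp K - 1)) ^ j * (1 - -(exp K - 1)) := by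
    have hcoeff : C ((-1 : K) ^ j / (j + 1)) * ((j + 1 : ℕ) : K⟦X⟧) = (-1) ^ j := by
      rw [← map_natCast C, ← map_mul, Nat.cast_add_one,
        div_mul_cancel₀ _ (Nat.cast_add_one_ne_zero j)]
      simp
    rw [Derivation.map_smul, derivative_pow, map_sub, derivative_exp, derivative_one, sub_zero,
      Nat.add_sub_cancel, smul_eq_C_mul, neg_pow (exp K - 1) j]
    linear_combination ((exp K - 1) ^ j * exp K) * hcoeff
  simp_rw [map_sum, hterm, ← sum_mul, geom_sum_mul_neg]

theorem coeff_sum_range_smul_exp_sub_one_pow {k m : ℕ} (hm : 2 ≤ m) (hmk : m ≤ k) :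
    coeff m (∑ j ∈ range k, ((-1 : K) ^ j / (j + 1)) • (exp K - 1) ^ (j + 1)) = 0 := by
  have hpow : coeff (m - 1) ((-(exp K - 1)) ^ k) = 0 := by
    obtain ⟨g, hg⟩ : X ∣ exp K - 1 := X_dvd_iff.mpr (by simp)
    rw [hg, neg_pow, mul_pow, mul_left_comm, coeff_X_pow_mul', if_neg (by omega)]
  have h := congrArg (coeff (m - 1)) (derivative_sum_range_smul_exp_sub_one_pow (K := K) k)
  rw [coeff_derivative, Nat.sub_add_cancel (by omega), map_sub, coeff_one, if_neg (by omega),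
    hpow, sub_zero] at h
  exact (mul_eq_zero.mp h).resolve_right (Nat.cast_add_one_ne_zero (m - 1))

end Field

end PowerSeries

/-- For every integer `k ≥ 2`,
`S'_k = Σ_{j=1}^{k} ((-1)^{j-1}/j) · Σ_{k_1+⋯+k_j=k, k_i ≥ 1} k·k!/(k_1!⋯k_j!) = 0`.
The inner sum over ordered compositions of `k` into `j` positive parts is realized as a
sum over `Composition k`, where `c.length` plays the role of `j`. -/
theorem alternating_composition_sum_with_k (k : ℕ) (hk : 2 ≤ k) :
    ∑ c : Composition k,
      ((-1 : ℝ) ^ (c.length - 1) / (c.length : ℝ)) *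
        ((k : ℝ) * (Nat.factorial k : ℝ) /
          ∏ i : Fin c.length, (Nat.factorial (c.blocksFun i) : ℝ)) = 0 := by
  have hblocks (c : Composition k) :
      ∏ i : Fin c.length, coeff (c.blocksFun i) (exp ℝ - 1) =
        (∏ i : Fin c.length, ((c.blocksFun i) ! : ℝ))⁻¹ := by
    rw [← prod_inv_distrib]
    exact prod_congr rfl fun i _ =>
      coeff_exp_sub_one (Nat.one_le_iff_ne_zero.mp (c.one_le_blocksFun i))
  calc _ = (k * k ! : ℝ) * ∑ c : Composition k, (-1 : ℝ) ^ (c.length - 1) / c.length *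
          ∏ i : Fin c.length, coeff (c.blocksFun i) (exp ℝ - 1) := by
        rw [mul_sum]
        exact sum_congr rfl fun c _ => by rw [hblocks]; ring
    _ = (k * k ! : ℝ) *
          coeff k (∑ j ∈ range (k + 1), ((-1 : ℝ) ^ (j - 1) / j) • (exp ℝ - 1) ^ j) := by
        rw [sum_compositions_eq_coeff_sum_smul_pow (by simp) (fun j => (-1 : ℝ) ^ (j - 1) / j)]
    _ = 0 := by
        rw [sum_range_succ', Nat.cast_zero, div_zero, zero_smul, add_zero]
        simp only [Nat.add_sub_cancel, Nat.cast_add_one]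
        rw [coeff_sum_range_smul_exp_sub_one_pow hk le_rfl, mul_zero]
end

section
/- For every integer k ≥ 3, the sum S_k = Σ_{j=1}^{k} ((-1)^{j-1}/j) · Σ_{k_1+⋯+k_j=k, k_i≥1} k!·(k_1(k_1−1)+⋯+k_j(k_j−1))/(k_1!⋯k_j!) equals zero. -/
/-!
Write the inner sum as a sum over a marked block `i`. The remaining weight
`(-1)^(j-1)/j · k!/(k_1!⋯k_j!)` is invariant under cyclic rotation of the blocks, and rotating
the marked block to the front is a bijection of marked compositions, so the factor `1/j` is traded
for the length `j`. Splitting off the first block `b`, the compositions of `k - b` contribute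
`∑ ∏ (-1/k_l!) = (-1)^(k-b)/(k-b)!`, the coefficients of `1/(1 + (e^x - 1)) = e^(-x)`. Hence
`S_k = -k! ∑_b b(b-1)/b! · (-1)^(k-b)/(k-b)! = -k!/(k-2)! · (1 - 1)^(k-2) = 0`.
-/

open Finset Nat

section Factorial

variable {K : Type*} [Field K]

theorem sum_antidiagonal_inv_factorial_mul_neg_one_pow [CharZero K] {n : ℕ} (hn : n ≠ 0) :
    ∑ p ∈ antidiagonal n, ((p.1 ! : K))⁻¹ * ((-1) ^ p.2 / p.2 !) = 0 := by
  have hbinom : ∑ p ∈ antidiagonal n, (n ! : K) * ((p.1 ! : K)⁻¹ * ((-1) ^ p.2 / p.2 !)) = 0 :=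
    calc _ = ∑ p ∈ antidiagonal n, n.choose p.1 • ((1 : K) ^ p.1 * (-1) ^ p.2) := by
          refine sum_congr rfl fun p hp => ?_
          rw [← mem_antidiagonal.1 hp, nsmul_eq_mul, cast_add_choose, one_pow, one_mul]
          field_simp
      _ = (1 + -1) ^ n := ((Commute.one_left _).add_pow' n).symm
      _ = 0 := by simp [hn]
  rw [← mul_sum] at hbinom
  exact (mul_eq_zero.1 hbinom).resolve_left (cast_ne_zero.2 n.factorial_ne_zero)

theorem sum_antidiagonal_mul_sub_one_div_factorial [CharZero K] {n : ℕ} (hn : 2 ≤ n) :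
    ∑ p ∈ antidiagonal n,
      ((p.1 + 1 : ℕ) : K) * (((p.1 + 1 : ℕ) : K) - 1) / (p.1 + 1)! * ((-1) ^ p.2 / p.2 !) = 0 := by
  obtain ⟨m, rfl⟩ : ∃ m, n = m + 1 := ⟨n - 1, by omega⟩
  rw [sum_antidiagonal_succ, ← sum_antidiagonal_inv_factorial_mul_neg_one_pow (K := K)
    (show m ≠ 0 by omega)]
  simp only [zero_add, cast_one, sub_self, mul_zero, zero_div, zero_mul]
  refine sum_congr rfl fun p _ => ?_
  have h : ((p.1 + 1 + 1 : ℕ) : K) ≠ 0 := cast_ne_zero.2 (p.1 + 1).succ_ne_zero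
  rw [factorial_succ, factorial_succ, cast_succ _, add_sub_cancel_right]
  push_cast at h ⊢
  field_simp

def negInvFactorialProd (K : Type*) [Field K] (l : List ℕ) : K :=
  (l.map fun b => -(b ! : K)⁻¹).prod

theorem negInvFactorialProd_eq (l : List ℕ) :
    negInvFactorialProd K l = (-1) ^ l.length / (l.map fun b => (b ! : K)).prod := by
  rw [negInvFactorialProd, div_eq_mul_inv, List.prod_inv, List.map_map,
    show (fun b => -(b ! : K)⁻¹) = Neg.neg ∘ ((fun x => x⁻¹) ∘ fun b => (b ! : K)) from rfl,
    ← List.map_map, List.prod_map_neg, List.length_map]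

theorem negInvFactorialProd_perm {l l' : List ℕ} (h : l.Perm l') :
    negInvFactorialProd K l = negInvFactorialProd K l' :=
  (h.map _).prod_eq

end Factorial

theorem List.head!_rotate {α : Type*} [Inhabited α] {l : List α} {i : ℕ} (h : i < l.length) :
    (l.rotate i).head! = l[i] := by
  rw [List.head!_eq_head?_getD, List.head?_rotate h, List.getElem?_eq_getElem h]
  rfl

namespace Composition

theorem sum_succ_eq_sum_antidiagonal {M : Type*} [AddCommMonoid M] (n : ℕ) (f : List ℕ → M) :
    ∑ c : Composition (n + 1), f c.blocks =
      ∑ p ∈ antidiagonal n, ∑ c : Composition p.2, f ((p.1 + 1) :: c.blocks) := by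
  rw [sum_sigma']
  symm
  refine sum_bij (fun x hx => ⟨(x.1.1 + 1) :: x.2.blocks, ?pos, ?sum⟩) (fun _ _ => mem_univ _)
    ?inj ?surj fun _ _ => rfl
  case pos =>
    intro b hb
    rcases List.mem_cons.1 hb with rfl | hb
    exacts [succ_pos _, x.2.blocks_pos hb]
  case sum =>
    rw [List.sum_cons, x.2.blocks_sum, add_right_comm, (mem_antidiagonal.1 (mem_sigma.1 hx).1)]
  case inj =>
    rintro ⟨⟨a, m⟩, c⟩ _ ⟨⟨a', m'⟩, c'⟩ _ h
    obtain ⟨ha, hc⟩ := List.cons_eq_cons.1 (congrArg Composition.blocks h)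
    obtain rfl : a = a' := by simpa using ha
    obtain rfl : m = m' := c.blocks_sum.symm.trans (hc ▸ c'.blocks_sum)
    obtain rfl : c = c' := Composition.ext hc
    rfl
  case surj =>
    rintro ⟨_ | ⟨b, l⟩, hpos, hsum⟩ -
    · simp at hsum
    have hb : 0 < b := hpos List.mem_cons_self
    refine ⟨⟨(b - 1, l.sum), ⟨l, fun h => hpos (List.mem_cons_of_mem _ h), rfl⟩⟩, ?_,
      Composition.ext ?_⟩
    · simp only [mem_sigma, HasAntidiagonal.mem_antidiagonal, mem_univ, and_true]
      simp only [List.sum_cons] at hsum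
      omega
    · simp only [Nat.sub_add_cancel hb]

def rotate {n : ℕ} (c : Composition n) (i : ℕ) : Composition n where
  blocks := c.blocks.rotate i
  blocks_pos h := c.blocks_pos (List.mem_rotate.1 h)
  blocks_sum := by rw [(c.blocks.rotate_perm i).sum_eq, c.blocks_sum]

@[simp]
theorem length_rotate {n : ℕ} (c : Composition n) (i : ℕ) : (c.rotate i).length = c.length :=
  c.blocks.length_rotate i

theorem rotate_rotate_eq_self {n : ℕ} (c : Composition n) {i j : ℕ} (h : i + j = c.length) :
    (c.rotate i).rotate j = c :=
  Composition.ext <| (c.blocks.rotate_rotate i j).trans (h ▸ c.blocks.rotate_length)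

def rotateSigmaEquiv (n : ℕ) :
    (Σ c : Composition n, Fin c.length) ≃ Σ c : Composition n, Fin c.length where
  toFun x := ⟨x.1.rotate x.2, Fin.cast (x.1.length_rotate _).symm x.2⟩
  invFun x := ⟨x.1.rotate (x.1.length - x.2), Fin.cast (x.1.length_rotate _).symm x.2⟩
  left_inv := fun ⟨c, i⟩ => by
    have h := c.rotate_rotate_eq_self (i := i) (j := (c.rotate i).length - i)
      (by rw [length_rotate]; omega)
    exact Sigma.ext h ((Fin.heq_ext_iff (congrArg length h)).2 rfl)
  right_inv := fun ⟨c, i⟩ => by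
    have h := c.rotate_rotate_eq_self (i := c.length - i) (j := i) (by omega)
    exact Sigma.ext h ((Fin.heq_ext_iff (congrArg length h)).2 rfl)

theorem sum_sum_rotate {M : Type*} [AddCommMonoid M] (n : ℕ) (f : List ℕ → M) :
    ∑ c : Composition n, ∑ i : Fin c.length, f (c.blocks.rotate i) =
      ∑ c : Composition n, c.length • f c.blocks := by
  calc _ = ∑ x : Σ c : Composition n, Fin c.length, f (rotateSigmaEquiv n x).1.blocks :=
        (Fintype.sum_sigma _).symm
    _ = ∑ x : Σ c : Composition n, Fin c.length, f x.1.blocks :=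
        (rotateSigmaEquiv n).sum_comp fun x => f x.1.blocks
    _ = _ := by simp [Fintype.sum_sigma]

variable {K : Type*} [Field K]

theorem sum_sum_div_length_mul_blocksFun [CharZero K] {n : ℕ} (hn : 0 < n) (w : List ℕ → K)
    (hw : ∀ l i, w (l.rotate i) = w l) (g : ℕ → K) :
    ∑ c : Composition n, ∑ i : Fin c.length, w c.blocks / c.length * g (c.blocksFun i) =
      ∑ c : Composition n, w c.blocks * g c.blocks.head! := by
  calc _ = ∑ c : Composition n, ∑ i : Fin c.length,
        w (c.blocks.rotate i) / (c.blocks.rotate i).length * g (c.blocks.rotate i).head! := by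
        refine sum_congr rfl fun c _ => sum_congr rfl fun i _ => ?_
        rw [hw, List.length_rotate, List.head!_rotate i.2]
        rfl
    _ = ∑ c : Composition n, c.length • (w c.blocks / c.length * g c.blocks.head!) :=
        sum_sum_rotate n fun l => w l / l.length * g l.head!
    _ = _ := sum_congr rfl fun c _ => by
        have hlen : (c.length : K) ≠ 0 := cast_ne_zero.2 (c.length_pos_of_pos hn).ne'
        rw [nsmul_eq_mul]
        field_simp

theorem sum_head!_mul_negInvFactorialProd (g : ℕ → K) (n : ℕ) :
    ∑ c : Composition (n + 1), negInvFactorialProd K c.blocks * g c.blocks.head! =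
      -∑ p ∈ antidiagonal n,
        g (p.1 + 1) / (p.1 + 1)! * ∑ c : Composition p.2, negInvFactorialProd K c.blocks := by
  rw [sum_succ_eq_sum_antidiagonal n fun l => negInvFactorialProd K l * g l.head!,
    ← sum_neg_distrib]
  refine sum_congr rfl fun p _ => ?_
  rw [mul_sum, ← sum_neg_distrib]
  refine sum_congr rfl fun c _ => ?_
  simp only [negInvFactorialProd, List.map_cons, List.prod_cons, List.head!_cons]
  ring

theorem sum_negInvFactorialProd [CharZero K] (n : ℕ) :
    ∑ c : Composition n, negInvFactorialProd K c.blocks = (-1) ^ n / n ! := by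
  induction n using Nat.strong_induction_on with
  | _ n ih =>
  rcases n with _ | n
  · have h : ∀ c : Composition 0, c = ones 0 := fun c =>
      Composition.ext <| List.length_eq_zero_iff.1 (c.length_eq_zero.2 rfl)
    rw [Fintype.sum_eq_single (ones 0) fun c hc => (hc (h c)).elim]
    simp [negInvFactorialProd, ones]
  · have hbinom := sum_antidiagonal_inv_factorial_mul_neg_one_pow (K := K) n.succ_ne_zero
    rw [sum_antidiagonal_succ, factorial_zero, cast_one, inv_one, one_mul] at hbinom
    have hE : ∀ p ∈ antidiagonal n, 1 / ((p.1 + 1)! : K) *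
        ∑ c : Composition p.2, negInvFactorialProd K c.blocks =
          ((p.1 + 1)! : K)⁻¹ * ((-1) ^ p.2 / p.2 !) := fun p hp => by
      rw [ih p.2 (by have := mem_antidiagonal.1 hp; omega), one_div]
    have hrec := sum_head!_mul_negInvFactorialProd (fun _ => (1 : K)) n
    simp only [mul_one] at hrec
    rw [hrec, sum_congr rfl hE]
    linear_combination -hbinom

end Composition

/-- For every integer `k ≥ 3`,
`S_k = Σ_{j=1}^{k} ((-1)^{j-1}/j) · Σ_{k_1+⋯+k_j=k, k_i ≥ 1}
  k!·(k_1(k_1−1)+⋯+k_j(k_j−1))/(k_1!⋯k_j!) = 0`.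
The inner sum over ordered compositions of `k` into `j` positive parts is realized as a
sum over `Composition k`, where `c.length` plays the role of `j`. -/
theorem alternating_composition_sum_second_deriv (k : ℕ) (hk : 3 ≤ k) :
    ∑ c : Composition k,
      ((-1 : ℝ) ^ (c.length - 1) / (c.length : ℝ)) *
        ((Nat.factorial k : ℝ) *
            (∑ i : Fin c.length, (c.blocksFun i : ℝ) * ((c.blocksFun i : ℝ) - 1)) /
          ∏ i : Fin c.length, (Nat.factorial (c.blocksFun i) : ℝ)) = 0 := by
  obtain ⟨n, rfl⟩ : ∃ n, k = n + 1 := ⟨k - 1, by omega⟩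
  set q : ℕ → ℝ := fun b => b * (b - 1)
  set w : List ℕ → ℝ := fun l => -(n + 1)! * negInvFactorialProd ℝ l
  have hw : ∀ l i, w (l.rotate i) = w l := fun l i => by
    simp only [w, negInvFactorialProd_perm (l.rotate_perm i)]
  have hterm : ∀ c : Composition (n + 1),
      (-1 : ℝ) ^ (c.length - 1) / c.length *
        ((n + 1)! * (∑ i : Fin c.length, q (c.blocksFun i)) /
          ∏ i : Fin c.length, ((c.blocksFun i)! : ℝ)) =
      ∑ i : Fin c.length, w c.blocks / c.length * q (c.blocksFun i) := fun c => by
    have hprod : ∏ i : Fin c.length, ((c.blocksFun i)! : ℝ) =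
        (c.blocks.map fun b => (b ! : ℝ)).prod :=
      Fin.prod_univ_fun_getElem c.blocks fun b => (b ! : ℝ)
    obtain ⟨m, hm⟩ : ∃ m, c.length = m + 1 :=
      ⟨c.length - 1, (Nat.sub_add_cancel (c.length_pos_of_pos n.succ_pos)).symm⟩
    rw [← mul_sum, hprod]
    simp only [w, negInvFactorialProd_eq, hm, Nat.add_sub_cancel, pow_succ]
    field_simp
  rw [sum_congr rfl fun c _ => hterm c,
    Composition.sum_sum_div_length_mul_blocksFun n.succ_pos w hw q]
  simp only [w, mul_assoc, ← mul_sum, Composition.sum_head!_mul_negInvFactorialProd,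
    Composition.sum_negInvFactorialProd]
  rw [sum_antidiagonal_mul_sub_one_div_factorial (by omega)]
  simp
end

section
/- Let f : ℂ → ℝ and for k ≥ 1 define G_k(z_1,…,z_k) = Σ_{j=1}^k ((-1)^{j-1}/j) Σ_{k_1+⋯+k_j=k, k_i≥1} (k!/(k_1!⋯k_j!)) Π_{l=1}^j f(z_l)^{k_l}. Then for all k ≥ 2 and all z_0 ∈ ℂ, G_k(z_0,…,z_0) = 0. -/
/-!
On the diagonal every product `∏ f(z₀)^{kₗ}` equals `f(z₀)^k`, so `G_k(z₀,…,z₀)` is `k! f(z₀)^k`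
times `∑_c ((-1)^{j-1}/j) ∏ 1/kₗ!` over compositions `c = (k₁,…,k_j)` of `k`. By Faà di Bruno this
sum is the `k`-th Taylor coefficient of `log (1 + (eˣ - 1)) = x`, hence zero for `k ≥ 2`.
-/

open scoped BigOperators

/-- The cumulant polynomial
`G_k(z_1,…,z_k) = Σ_{j=1}^k ((-1)^{j-1}/j) Σ_{k_1+⋯+k_j=k, k_i≥1}
  (k!/(k_1!⋯k_j!)) Π_{l=1}^j f(z_l)^{k_l}`,
realized as a sum over `Composition k` (with `c.length` playing the role of `j`). -/
noncomputable def cumulantG (f : ℂ → ℝ) (k : ℕ) (z : Fin k → ℂ) : ℝ :=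
  ∑ c : Composition k,
    ((-1 : ℝ) ^ (c.length - 1) / (c.length : ℝ)) *
      ((Nat.factorial k : ℝ) /
        ∏ i : Fin c.length, (Nat.factorial (c.blocksFun i) : ℝ)) *
      ∏ i : Fin c.length, f (z (Fin.castLE c.length_le i)) ^ (c.blocksFun i)

open Nat FormalMultilinearSeries

theorem FormalMultilinearSeries.coeff_ofScalars_comp_ofScalars {𝕜 : Type*}
    [NontriviallyNormedField 𝕜] (a b : ℕ → 𝕜) (n : ℕ) :
    ((ofScalars 𝕜 a).comp (ofScalars 𝕜 b)).coeff n =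
      ∑ c : Composition n, a c.length * ∏ i, b (c.blocksFun i) := by
  rw [coeff, FormalMultilinearSeries.comp, sum_apply]
  refine Finset.sum_congr rfl fun c _ => ?_
  simp [compAlongComposition_apply, applyComposition, ofScalars, List.prod_ofFn]

/-- `FormalMultilinearSeries.comp` ignores the constant term of the inner series, so composing
the series of `log` at `1` with that of `exp` at `0` is composing `log (1 + y)` with `eˣ - 1`. -/
theorem ofScalars_log_comp_ofScalars_exp :
    (ofScalars ℝ fun n ↦ -(-1 : ℝ) ^ n / n).comp (ofScalars ℝ fun n ↦ (n ! : ℝ)⁻¹) =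
      (ContinuousLinearMap.id ℝ ℝ).fpowerSeries 0 := by
  have hcomp : HasFPowerSeriesAt (Real.log ∘ Real.exp)
      ((ofScalars ℝ fun n ↦ -(-1 : ℝ) ^ n / n).comp (ofScalars ℝ fun n ↦ (n ! : ℝ)⁻¹)) 0 := by
    refine HasFPowerSeriesAt.comp ?_ ?_
    · simpa using hasFPowerSeriesAt_log_one
    · simpa [Real.exp_eq_exp_ℝ, ← NormedSpace.expSeries_eq_ofScalars] using
        NormedSpace.exp_hasFPowerSeriesAt_zero
  have hid : Real.log ∘ Real.exp = ContinuousLinearMap.id ℝ ℝ := by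
    funext x
    simp
  rw [hid] at hcomp
  exact hcomp.eq_formalMultilinearSeries ((ContinuousLinearMap.id ℝ ℝ).hasFPowerSeriesAt 0)

theorem sum_composition_log_exp_coeff_eq_zero {n : ℕ} (hn : 2 ≤ n) :
    ∑ c : Composition n, -(-1 : ℝ) ^ c.length / c.length * ∏ i, ((c.blocksFun i)! : ℝ)⁻¹ = 0 := by
  obtain ⟨m, rfl⟩ : ∃ m, n = m + 2 := ⟨n - 2, by omega⟩
  rw [← coeff_ofScalars_comp_ofScalars (fun n ↦ -(-1 : ℝ) ^ n / n) (fun n ↦ (n ! : ℝ)⁻¹),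
    ofScalars_log_comp_ofScalars_exp, coeff,
    ContinuousLinearMap.fpowerSeries_apply_add_two, _root_.zero_apply]

theorem cumulantG_const (f : ℂ → ℝ) (k : ℕ) (z0 : ℂ) :
    cumulantG f k (fun _ => z0) = k ! * f z0 ^ k *
      ∑ c : Composition k, -(-1 : ℝ) ^ c.length / c.length *
        ∏ i, ((c.blocksFun i)! : ℝ)⁻¹ := by
  rw [cumulantG, Finset.mul_sum]
  refine Finset.sum_congr rfl fun c _ => ?_
  rw [Finset.prod_pow_eq_pow_sum, c.sum_blocksFun, Finset.prod_inv_distrib]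
  have hsign : ∀ j : ℕ, (-1 : ℝ) ^ (j - 1) / j = -(-1) ^ j / j := by
    rintro (_ | j) <;> simp [pow_succ]
  rw [hsign, div_eq_mul_inv (k ! : ℝ)]
  ring

/-- for all `k ≥ 2` and `z_0 ∈ ℂ`, `G_k(z_0,…,z_0) = 0`. -/
theorem cumulantG_diag_eq_zero (f : ℂ → ℝ) (k : ℕ) (hk : 2 ≤ k) (z0 : ℂ) :
    cumulantG f k (fun _ => z0) = 0 := by
  rw [cumulantG_const, sum_composition_log_exp_coeff_eq_zero hk, mul_zero]
end

section
/- Let K be a Hermitian symmetric kernel with |K(z,w)| = φ(z−w) where φ is bounded, continuous, and ∫(1+|z|³)φ(z)dA(z) < ∞, and let K_ρ(z,w) = ρK(√ρ z, √ρ w). Suppose f : ℂ → ℝ is C³ with compact support and K is reproducing. Then Var[Tr_ρ(f)] → σ_f² := (1/2)∫_ℂ∫_ℂ (∇f(z)·w)² φ(w)² dA(z) dA(w) as ρ → ∞, with error O(ρ^{-1/2}). -/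
/-!
After the substitution `w = z - u / √ρ` the variance becomes
`½ ∫∫ ρ (f z - f (z - u / √ρ))² φ(u)² du dz`. Taylor's formula gives
`√ρ (f z - f (z - u / √ρ)) = Df(z) u + O(‖u‖² / √ρ)`, so the two integrands differ by
`O(‖u‖³ φ(u)² / √ρ)`. For fixed `u` that difference vanishes unless `z` or `z - u / √ρ` lies in
`supp f`; integrating first in `z` therefore costs only a factor `2 |supp f|`, and what is left is
the third moment of `φ²`, which is finite because `φ` is bounded and `(1 + ‖z‖³) φ` is integrable.
-/

open MeasureTheory Module
open scoped NNReal

section Taylor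

variable {E : Type*} [NormedAddCommGroup E] [NormedSpace ℝ E] {f : E → ℝ} {C₁ C₂ : ℝ≥0}

theorem abs_fderiv_apply_le_of_lipschitzWith (hfL : LipschitzWith C₁ f) (x h : E) :
    |fderiv ℝ f x h| ≤ C₁ * ‖h‖ :=
  ((fderiv ℝ f x).le_opNorm h).trans (by gcongr; exact norm_fderiv_le_of_lipschitz ℝ hfL)

theorem abs_sub_sub_fderiv_le (hf : Differentiable ℝ f) (hDf : LipschitzWith C₂ (fderiv ℝ f))
    (x h : E) : |f x - f (x - h) - fderiv ℝ f x h| ≤ C₂ * ‖h‖ ^ 2 := by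
  have hbound : ∀ y ∈ Metric.closedBall x ‖h‖, ‖fderiv ℝ f y - fderiv ℝ f x‖ ≤ C₂ * ‖h‖ :=
    fun y hy => by
      rw [← dist_eq_norm]
      exact (hDf.dist_le_mul y x).trans (by gcongr; exact hy)
  have hxh : x - h ∈ Metric.closedBall x ‖h‖ := by simp
  have := (convex_closedBall x ‖h‖).norm_image_sub_le_of_norm_fderiv_le' (fun y _ => hf y)
    hbound hxh (Metric.mem_closedBall_self (norm_nonneg h))
  simpa [Real.norm_eq_abs, sq, mul_assoc] using this

theorem abs_sq_sub_sub_sq_fderiv_le (hf : Differentiable ℝ f) (hfL : LipschitzWith C₁ f)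
    (hDf : LipschitzWith C₂ (fderiv ℝ f)) (x h : E) :
    |(f x - f (x - h)) ^ 2 - fderiv ℝ f x h ^ 2| ≤ 2 * C₁ * C₂ * ‖h‖ ^ 3 := by
  have hdiff : |f x - f (x - h)| ≤ C₁ * ‖h‖ := by
    simpa [Real.dist_eq, dist_eq_norm] using hfL.dist_le_mul x (x - h)
  rw [sq_sub_sq, abs_mul, mul_comm]
  calc |f x - f (x - h) - fderiv ℝ f x h| * |f x - f (x - h) + fderiv ℝ f x h|
      ≤ (C₂ * ‖h‖ ^ 2) * (C₁ * ‖h‖ + C₁ * ‖h‖) := by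
        gcongr
        · exact abs_sub_sub_fderiv_le hf hDf x h
        · exact (abs_add_le _ _).trans
            (add_le_add hdiff (abs_fderiv_apply_le_of_lipschitzWith hfL x h))
    _ = 2 * C₁ * C₂ * ‖h‖ ^ 3 := by ring

theorem abs_rescaled_sq_sub_sq_fderiv_le (hf : Differentiable ℝ f) (hfL : LipschitzWith C₁ f)
    (hDf : LipschitzWith C₂ (fderiv ℝ f)) {s : ℝ} (hs : 0 < s) (x u : E) :
    |s ^ 2 * (f x - f (x - s⁻¹ • u)) ^ 2 - fderiv ℝ f x u ^ 2| ≤ 2 * C₁ * C₂ * ‖u‖ ^ 3 / s := by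
  have key := abs_sq_sub_sub_sq_fderiv_le hf hfL hDf x (s⁻¹ • u)
  rw [map_smul, smul_eq_mul, norm_smul, Real.norm_of_nonneg (inv_nonneg.2 hs.le)] at key
  have hscale : s ^ 2 * (f x - f (x - s⁻¹ • u)) ^ 2 - fderiv ℝ f x u ^ 2
      = s ^ 2 * ((f x - f (x - s⁻¹ • u)) ^ 2 - (s⁻¹ * fderiv ℝ f x u) ^ 2) := by
    field_simp
  rw [hscale, abs_mul, abs_of_pos (by positivity)]
  calc s ^ 2 * |(f x - f (x - s⁻¹ • u)) ^ 2 - (s⁻¹ * fderiv ℝ f x u) ^ 2|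
      ≤ s ^ 2 * (2 * C₁ * C₂ * (s⁻¹ * ‖u‖) ^ 3) := by gcongr
    _ = 2 * C₁ * C₂ * ‖u‖ ^ 3 / s := by field_simp

end Taylor

section Localized

variable {G β : Type*} [AddGroup G] [MeasurableSpace G] [MeasurableAdd G] [MeasurableSpace β]
  {μ : Measure G} [μ.IsAddRightInvariant] {T : Set G}

theorem integrable_and_integral_abs_le_of_eq_zero_of_sub_notMem (hT : MeasurableSet T)
    (hTμ : μ T ≠ ⊤) {g : G → ℝ} (hg : AEStronglyMeasurable g μ) (a : G) {c : ℝ}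
    (hbound : ∀ z, |g z| ≤ c) (hvanish : ∀ z, z ∉ T → z - a ∉ T → g z = 0) :
    Integrable g μ ∧ ∫ z, |g z| ∂μ ≤ 2 * μ.real T * c := by
  set S := T ∪ (· - a) ⁻¹' T
  have hshift : μ ((· - a) ⁻¹' T) = μ T := by
    simpa only [sub_eq_add_neg] using measure_preimage_add_right μ (-a) T
  have hS : MeasurableSet S := hT.union <| by
    simpa only [sub_eq_add_neg] using measurable_add_const (-a) hT
  have hSμ : μ.real S ≤ 2 * μ.real T := by
    have := measureReal_union_le (μ := μ) T ((· - a) ⁻¹' T)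
    rwa [measureReal_def _ ((· - a) ⁻¹' T), hshift, ← measureReal_def, ← two_mul] at this
  have hind : ∀ z, |g z| ≤ S.indicator (fun _ => c) z := by
    intro z
    by_cases hz : z ∈ S
    · simpa [Set.indicator_of_mem hz] using hbound z
    · rw [Set.indicator_of_notMem hz, hvanish z (fun h => hz (.inl h)) (fun h => hz (.inr h)),
        abs_zero]
  have hSint : Integrable (S.indicator fun _ => c) μ :=
    (integrable_indicator_iff hS).2 (integrableOn_const (measure_union_ne_top hTμ (hshift ▸ hTμ)))
  have hc : 0 ≤ c := (abs_nonneg _).trans (hbound 0)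
  refine ⟨hSint.mono' hg (.of_forall hind), ?_⟩
  calc ∫ z, |g z| ∂μ ≤ ∫ z, S.indicator (fun _ => c) z ∂μ :=
        integral_mono_of_nonneg (.of_forall fun _ => abs_nonneg _) hSint (.of_forall hind)
    _ = μ.real S * c := by rw [integral_indicator_const _ hS, smul_eq_mul]
    _ ≤ 2 * μ.real T * c := by gcongr

variable [SFinite μ] {ν : Measure β} [SFinite ν]

theorem integrable_prod_and_integral_abs_le_of_eq_zero_of_sub_notMem (hT : MeasurableSet T)
    (hTμ : μ T ≠ ⊤) {F : G × β → ℝ} (hF : AEStronglyMeasurable F (μ.prod ν)) (a : β → G)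
    {w : β → ℝ} (hw : Integrable w ν) (hbound : ∀ z u, |F (z, u)| ≤ w u)
    (hvanish : ∀ z u, z ∉ T → z - a u ∉ T → F (z, u) = 0) :
    Integrable F (μ.prod ν) ∧ ∫ p, |F p| ∂(μ.prod ν) ≤ 2 * μ.real T * ∫ u, w u ∂ν := by
  have hsection : ∀ᵐ u ∂ν, Integrable (fun z => F (z, u)) μ ∧
      ∫ z, |F (z, u)| ∂μ ≤ 2 * μ.real T * w u := by
    filter_upwards [hF.prodMk_right] with u hu
    exact integrable_and_integral_abs_le_of_eq_zero_of_sub_notMem hT hTμ hu (a u)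
      (fun z => hbound z u) (fun z => hvanish z u)
  have hmajor : Integrable (fun u => 2 * μ.real T * w u) ν := hw.const_mul _
  have hFint : Integrable F (μ.prod ν) := by
    refine (integrable_prod_iff' hF).2 ⟨hsection.mono fun u hu => hu.1, hmajor.mono' ?_ ?_⟩
    · exact hF.prod_swap.norm.integral_prod_right'
    · filter_upwards [hsection] with u hu
      rw [Real.norm_of_nonneg (integral_nonneg fun _ => norm_nonneg _)]
      exact hu.2
  refine ⟨hFint, ?_⟩
  rw [integral_prod_symm _ hFint.abs, ← integral_const_mul]
  exact integral_mono_ae hFint.abs.integral_prod_right hmajor (hsection.mono fun u hu => hu.2)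

end Localized

section Rescaling

variable {E : Type*} [NormedAddCommGroup E] [NormedSpace ℝ E] [MeasurableSpace E] [BorelSpace E]
  [FiniteDimensional ℝ E] {μ : Measure E} [μ.IsAddHaarMeasure]

theorem integral_comp_sub_inv_smul {F : Type*} [NormedAddCommGroup F] [NormedSpace ℝ F]
    (H : E → F) (z : E) {s : ℝ} (hs : 0 ≤ s) :
    ∫ u, H (z - s⁻¹ • u) ∂μ = s ^ finrank ℝ E • ∫ w, H w ∂μ := by
  rw [μ.integral_comp_inv_smul_of_nonneg (fun v => H (z - v)) hs, integral_sub_left_eq_self]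

theorem abs_integral_rescaled_sq_sub_integral_fderiv_sq_le {f : E → ℝ} {C₁ C₂ : ℝ≥0}
    (hf : Differentiable ℝ f) (hfL : LipschitzWith C₁ f) (hDf : LipschitzWith C₂ (fderiv ℝ f))
    (hfs : HasCompactSupport f) {ψ : E → ℝ} (hψ : AEStronglyMeasurable ψ μ) (hψ0 : ∀ u, 0 ≤ ψ u)
    (hψ2 : Integrable (fun u => ‖u‖ ^ 2 * ψ u) μ) (hψ3 : Integrable (fun u => ‖u‖ ^ 3 * ψ u) μ)
    {s : ℝ} (hs : 0 < s) :
    |∫ z, ∫ u, s ^ 2 * (f z - f (z - s⁻¹ • u)) ^ 2 * ψ u ∂μ ∂μ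
        - ∫ z, ∫ u, fderiv ℝ f z u ^ 2 * ψ u ∂μ ∂μ|
      ≤ 4 * C₁ * C₂ * μ.real (tsupport f) * (∫ u, ‖u‖ ^ 3 * ψ u ∂μ) / s := by
  set T := tsupport f
  set F : E × E → ℝ := fun p => s ^ 2 * (f p.1 - f (p.1 - s⁻¹ • p.2)) ^ 2 * ψ p.2
  set G : E × E → ℝ := fun p => fderiv ℝ f p.1 p.2 ^ 2 * ψ p.2
  have hT : MeasurableSet T := (isClosed_tsupport f).measurableSet
  have hTμ : μ T ≠ ⊤ := hfs.measure_lt_top.ne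
  have hFm : AEStronglyMeasurable F (μ.prod μ) := by
    have := hf.continuous
    exact Continuous.aestronglyMeasurable (by fun_prop) |>.mul hψ.comp_snd
  have hGm : AEStronglyMeasurable G (μ.prod μ) :=
    ((hDf.continuous.comp continuous_fst).clm_apply continuous_snd |>.pow 2)
      |>.aestronglyMeasurable.mul hψ.comp_snd
  have hvanish : ∀ z h, z ∉ T → z - h ∉ T → f z = 0 ∧ f (z - h) = 0 ∧ fderiv ℝ f z = 0 :=
    fun z h hz hzh => ⟨image_eq_zero_of_notMem_tsupport hz,
      image_eq_zero_of_notMem_tsupport hzh, fderiv_of_notMem_tsupport ℝ hz⟩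
  have hGbound : ∀ z u, |G (z, u)| ≤ C₁ ^ 2 * (‖u‖ ^ 2 * ψ u) := fun z u => by
    rw [abs_mul, abs_of_nonneg (hψ0 u), abs_pow, ← mul_assoc, ← mul_pow]
    gcongr
    · exact hψ0 u
    · exact abs_fderiv_apply_le_of_lipschitzWith hfL z u
  have hDbound : ∀ z u, |F (z, u) - G (z, u)| ≤ 2 * C₁ * C₂ / s * (‖u‖ ^ 3 * ψ u) :=
    fun z u => by
      rw [← sub_mul, abs_mul, abs_of_nonneg (hψ0 u), ← mul_assoc, ← mul_div_right_comm]
      gcongr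
      · exact hψ0 u
      · exact abs_rescaled_sq_sub_sq_fderiv_le hf hfL hDf hs z u
  obtain ⟨hGi, -⟩ := integrable_prod_and_integral_abs_le_of_eq_zero_of_sub_notMem hT hTμ hGm 0
    (hψ2.const_mul (C₁ ^ 2)) hGbound (fun z u hz hz' => by simp [G, (hvanish z 0 hz hz').2.2])
  obtain ⟨hDi, hD⟩ := integrable_prod_and_integral_abs_le_of_eq_zero_of_sub_notMem hT hTμ
    (hFm.sub hGm) (fun u => s⁻¹ • u) (hψ3.const_mul (2 * C₁ * C₂ / s)) hDbound
    (fun z u hz hz' => by simp [F, G, hvanish z _ hz hz'])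
  have hFi : Integrable F (μ.prod μ) := by simpa using hDi.add hGi
  rw [← integral_prod _ hFi, ← integral_prod _ hGi, ← integral_sub hFi hGi]
  calc |∫ p, F p - G p ∂μ.prod μ| ≤ ∫ p, |F p - G p| ∂μ.prod μ := abs_integral_le_integral_abs
    _ ≤ 2 * μ.real T * ∫ u, 2 * C₁ * C₂ / s * (‖u‖ ^ 3 * ψ u) ∂μ := hD
    _ = _ := by rw [integral_const_mul]; ring

end Rescaling

theorem integrable_norm_pow_mul_sq {E : Type*} [NormedAddCommGroup E] [MeasurableSpace E]
    [OpensMeasurableSpace E] {μ : Measure E} {φ : E → ℝ} (hφ : AEStronglyMeasurable φ μ)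
    (hφ0 : ∀ z, 0 ≤ φ z) {M : ℝ} (hM : ∀ z, φ z ≤ M)
    (hmom : Integrable (fun z => (1 + ‖z‖ ^ 3) * φ z) μ) {k : ℕ} (hk : k ≤ 3) :
    Integrable (fun z => ‖z‖ ^ k * φ z ^ 2) μ := by
  refine (hmom.const_mul M).mono' ((continuous_norm.pow k).aestronglyMeasurable.mul (hφ.pow 2))
    (.of_forall fun z => ?_)
  have hpow : ‖z‖ ^ k ≤ 1 + ‖z‖ ^ 3 := by
    rcases le_total ‖z‖ 1 with h | h
    · linarith [pow_le_one₀ (n := k) (norm_nonneg z) h, pow_nonneg (norm_nonneg z) 3]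
    · linarith [pow_le_pow_right₀ h hk]
  have hφz := hφ0 z
  rw [Real.norm_of_nonneg (by positivity)]
  calc ‖z‖ ^ k * φ z ^ 2 = ‖z‖ ^ k * φ z * φ z := by ring
    _ ≤ (1 + ‖z‖ ^ 3) * φ z * M := by gcongr; exact hM z
    _ = M * ((1 + ‖z‖ ^ 3) * φ z) := by ring

theorem integral_sq_sub_mul_norm_rescaled_kernel_sq {K : ℂ → ℂ → ℂ} {φ : ℂ → ℝ}
    (habs : ∀ z w, ‖K z w‖ = φ (z - w)) (f : ℂ → ℝ) {s : ℝ} (hs : 0 < s) (z : ℂ) :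
    ∫ w, (f z - f w) ^ 2 * ‖((s ^ 2 : ℝ) : ℂ) * K (s * z) (s * w)‖ ^ 2
      = ∫ u, s ^ 2 * (f z - f (z - s⁻¹ • u)) ^ 2 * φ u ^ 2 := by
  set H : ℂ → ℝ := fun w => (f z - f w) ^ 2 * ‖((s ^ 2 : ℝ) : ℂ) * K (s * z) (s * w)‖ ^ 2
  have hH : ∀ u, H (z - s⁻¹ • u) = s ^ 2 * (s ^ 2 * (f z - f (z - s⁻¹ • u)) ^ 2 * φ u ^ 2) := by
    intro u
    have hu : (s : ℂ) * z - s * (z - s⁻¹ • u) = u := by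
      rw [Complex.real_smul, ← mul_sub, sub_sub_cancel, ← mul_assoc, Complex.ofReal_inv,
        mul_inv_cancel₀ (by exact_mod_cast hs.ne'), one_mul]
    simp only [H, norm_mul, habs, hu, Complex.norm_real, Real.norm_of_nonneg (sq_nonneg s)]
    ring
  have := integral_comp_sub_inv_smul (μ := volume) H z hs.le
  simp only [hH, integral_const_mul, Complex.finrank_real_complex, smul_eq_mul] at this
  exact (mul_left_cancel₀ (pow_ne_zero 2 hs.ne') this).symm

theorem variance_limit_translation_invariant_general
    (K : ℂ → ℂ → ℂ) (φ : ℂ → ℝ) (f : ℂ → ℝ) (V : ℝ → ℝ)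
    (habs : ∀ z w, ‖K z w‖ = φ (z - w))
    (hφc : Continuous φ) (hφ0 : ∀ z, 0 ≤ φ z) (hφb : ∃ M, ∀ z, φ z ≤ M)
    (hmom : Integrable fun z : ℂ => (1 + ‖z‖ ^ 3) * φ z)
    (hf : ContDiff ℝ 3 f) (hsupp : HasCompactSupport f)
    (hV : ∀ ρ : ℝ, 0 < ρ →
      V ρ = (1 / 2) * ∫ z, ∫ w,
        (f z - f w) ^ 2
          * ‖(ρ : ℂ) * K ((Real.sqrt ρ : ℂ) * z) ((Real.sqrt ρ : ℂ) * w)‖ ^ 2) :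
    ∃ C : ℝ, ∀ ρ : ℝ, 1 ≤ ρ →
      |V ρ - (1 / 2) * ∫ z, ∫ w, (fderiv ℝ f z w) ^ 2 * φ w ^ 2|
        ≤ C / Real.sqrt ρ := by
  obtain ⟨M, hM⟩ := hφb
  obtain ⟨C₁, hfL⟩ := hf.lipschitzWith_of_hasCompactSupport hsupp (by norm_num)
  obtain ⟨C₂, hDf⟩ := (hf.fderiv_right (m := 2) (by norm_num)).lipschitzWith_of_hasCompactSupport
    (hsupp.fderiv ℝ) (by norm_num)
  have hweight {k : ℕ} (hk : k ≤ 3) :=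
    integrable_norm_pow_mul_sq hφc.aestronglyMeasurable hφ0 hM hmom hk
  refine ⟨2 * C₁ * C₂ * volume.real (tsupport f) * ∫ u, ‖u‖ ^ 3 * φ u ^ 2, fun ρ hρ => ?_⟩
  obtain ⟨s, hs, rfl⟩ : ∃ s, 0 < s ∧ ρ = s ^ 2 :=
    ⟨√ρ, by positivity, (Real.sq_sqrt (by linarith)).symm⟩
  rw [hV _ (by positivity), Real.sqrt_sq hs.le]
  simp_rw [integral_sq_sub_mul_norm_rescaled_kernel_sq habs f hs]
  have := abs_integral_rescaled_sq_sub_integral_fderiv_sq_le (hf.differentiable (by norm_num))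
    hfL hDf hsupp (ψ := fun u => φ u ^ 2) (hφc.pow 2).aestronglyMeasurable
    (fun u => sq_nonneg (φ u)) (hweight (by norm_num)) (hweight le_rfl) hs
  rw [← mul_sub, abs_mul, abs_of_pos (by norm_num)]
  calc _ ≤ (1 / 2 : ℝ) * (4 * C₁ * C₂ * volume.real (tsupport f)
          * (∫ u, ‖u‖ ^ 3 * φ u ^ 2) / s) := by gcongr
    _ = _ := by ring

/-- let `K` be a Hermitian symmetric reproducing kernel with
`|K(z,w)| = φ(z−w)`, `φ` bounded continuous and `∫ (1+|z|³) φ dA < ∞`, and let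
`K_ρ(z,w) = ρ K(√ρ z, √ρ w)`.  For `f : ℂ → ℝ` of class `C³` with compact support, the
variance of the linear statistic — which by the reproducing property equals
`½ ∫∫ (f(z)−f(w))² |K_ρ(z,w)|² dA dA` — converges, with error `O(ρ^{-1/2})`, to
`σ_f² = ½ ∫∫ (∇f(z)·w)² φ(w)² dA(z) dA(w)`, where `∇f(z)·w = Df(z)(w)`. -/
theorem variance_limit_translation_invariant
    (K : ℂ → ℂ → ℂ) (φ : ℂ → ℝ) (f : ℂ → ℝ) (V : ℝ → ℝ)
    (hherm : ∀ z w, K z w = starRingEnd ℂ (K w z))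
    (habs : ∀ z w, ‖K z w‖ = φ (z - w))
    (hφc : Continuous φ) (hφ0 : ∀ z, 0 ≤ φ z) (hφb : ∃ M, ∀ z, φ z ≤ M)
    (hmom : Integrable fun z : ℂ => (1 + ‖z‖ ^ 3) * φ z)
    (hrep : ∀ x y, K x y = ∫ u, K x u * K u y)
    (hf : ContDiff ℝ 3 f) (hsupp : HasCompactSupport f)
    (hV : ∀ ρ : ℝ, 0 < ρ →
      V ρ = (1 / 2) * ∫ z, ∫ w,
        (f z - f w) ^ 2
          * ‖(ρ : ℂ) * K ((Real.sqrt ρ : ℂ) * z) ((Real.sqrt ρ : ℂ) * w)‖ ^ 2) :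
    ∃ C : ℝ, ∀ ρ : ℝ, 1 ≤ ρ →
      |V ρ - (1 / 2) * ∫ z, ∫ w, (fderiv ℝ f z w) ^ 2 * φ w ^ 2|
        ≤ C / Real.sqrt ρ :=
  variance_limit_translation_invariant_general K φ f V habs hφc hφ0 hφb hmom hf hsupp hV
end
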